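/- Let V be a vector space over ℂ with ℤ-indexed bilinear products aₙb and let P : V → V be a linear map. Then P is an idempotent (P ∘ P = P) ordinary Rota-Baxter operator of weight −1 on V if and only if there exist subspaces V¹ and V² of V such that V = V¹ ⊕ V² (direct sum), both V¹ and V² are closed under all the products (aₙb ∈ Vⁱ whenever a,b ∈ Vⁱ and n ∈ ℤ, for i = 1,2), and P is the projection of V onto V¹ along V². In that case V¹ = P(V) and V² = (Id − P)(V). -/
import Mathlib


/-- An ordinary Rota-Baxter operator of weight `lam` on the ℤ-indexed products `μ`. -/
def OrdRBO {V : Type*} [AddCommGroup V] [Module ℂ V]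
    (μ : ℤ → V →ₗ[ℂ] V →ₗ[ℂ] V) (P : V →ₗ[ℂ] V) (lam : ℂ) : Prop :=
  ∀ (n : ℤ) (a b : V),
    μ n (P a) (P b) = P (μ n (P a) b) + P (μ n a (P b)) + lam • P (μ n a b)

/-- A subspace closed under all the products `aₙb`. -/
def ClosedUnder {V : Type*} [AddCommGroup V] [Module ℂ V]
    (μ : ℤ → V →ₗ[ℂ] V →ₗ[ℂ] V) (W : Submodule ℂ V) : Prop :=
  ∀ (n : ℤ) (a b : V), a ∈ W → b ∈ W → μ n a b ∈ W

/-- `P` is an idempotent ordinary Rota-Baxter operator of weight `−1` iff `V`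
decomposes as a direct sum of two subalgebras with `P` the projection onto the
first; in that case the summands are `P(V)` and `(Id − P)(V)`. -/
theorem stmt7 {V : Type*} [AddCommGroup V] [Module ℂ V]
    (μ : ℤ → V →ₗ[ℂ] V →ₗ[ℂ] V) (P : V →ₗ[ℂ] V) :
    ((P ∘ₗ P = P ∧ OrdRBO μ P (-1)) ↔
      ∃ V1 V2 : Submodule ℂ V, IsCompl V1 V2 ∧
        ClosedUnder μ V1 ∧ ClosedUnder μ V2 ∧
        (∀ a ∈ V1, ∀ b ∈ V2, P (a + b) = a)) ∧
    (∀ V1 V2 : Submodule ℂ V, IsCompl V1 V2 →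
      ClosedUnder μ V1 → ClosedUnder μ V2 →
      (∀ a ∈ V1, ∀ b ∈ V2, P (a + b) = a) →
      V1 = LinearMap.range P ∧ V2 = LinearMap.range (LinearMap.id - P)) := by
  constructor
  · constructor
    · rintro ⟨hidem, hrbo⟩
      have hPP : ∀ v, P (P v) = P v := fun v => by
        have := LinearMap.ext_iff.mp hidem v
        simpa using this
      refine ⟨LinearMap.range P, LinearMap.ker P, ⟨?_, ?_⟩, ?_, ?_, ?_⟩
      · rw [Submodule.disjoint_def]
        rintro x ⟨y, rfl⟩ hx
        rw [LinearMap.mem_ker] at hx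
        rw [← hPP y, hx]
      · rw [codisjoint_iff, Submodule.eq_top_iff']
        intro v
        exact Submodule.mem_sup.mpr ⟨P v, ⟨v, rfl⟩, v - P v,
          LinearMap.mem_ker.mpr (by simp [hPP]), by abel⟩
      · rintro n a b ⟨x, rfl⟩ ⟨y, rfl⟩
        rw [hrbo n x y]
        exact Submodule.add_mem _ (Submodule.add_mem _ ⟨_, rfl⟩ ⟨_, rfl⟩)
          (Submodule.smul_mem _ _ ⟨_, rfl⟩)
      · intro n a b ha hb
        rw [LinearMap.mem_ker] at ha hb ⊢
        have := hrbo n a b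
        rw [ha, hb] at this
        simp only [map_zero, LinearMap.zero_apply, LinearMap.map_zero, zero_add,
          neg_smul, one_smul] at this
        exact neg_eq_zero.mp this.symm
      · rintro a ⟨x, rfl⟩ b hb
        rw [map_add, hPP, LinearMap.mem_ker.mp hb, add_zero]
    · rintro ⟨V1, V2, hc, h1, h2, hP⟩
      have hP1 : ∀ a ∈ V1, P a = a := fun a ha => by
        simpa using hP a ha 0 V2.zero_mem
      have hP2 : ∀ b ∈ V2, P b = 0 := fun b hb => by
        simpa using hP 0 V1.zero_mem b hb
      have decomp : ∀ v : V, ∃ a ∈ V1, ∃ b ∈ V2, v = a + b := fun v => by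
        have hv : v ∈ V1 ⊔ V2 := by rw [codisjoint_iff.mp hc.codisjoint]; trivial
        obtain ⟨a, ha, b, hb, h⟩ := Submodule.mem_sup.mp hv
        exact ⟨a, ha, b, hb, h.symm⟩
      constructor
      · apply LinearMap.ext
        intro v
        obtain ⟨a, ha, b, hb, rfl⟩ := decomp v
        simp only [LinearMap.comp_apply]
        rw [hP a ha b hb, hP1 a ha]
      · intro n a b
        obtain ⟨a1, ha1, a2, ha2, rfl⟩ := decomp a
        obtain ⟨b1, hb1, b2, hb2, rfl⟩ := decomp b
        rw [hP _ ha1 _ ha2, hP _ hb1 _ hb2]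
        simp only [map_add, LinearMap.add_apply]
        rw [hP1 _ (h1 n _ _ ha1 hb1), hP2 _ (h2 n _ _ ha2 hb2)]
        module
  · intro V1 V2 hc h1 h2 hP
    have hP1 : ∀ a ∈ V1, P a = a := fun a ha => by
      simpa using hP a ha 0 V2.zero_mem
    have hP2 : ∀ b ∈ V2, P b = 0 := fun b hb => by
      simpa using hP 0 V1.zero_mem b hb
    have decomp : ∀ v : V, ∃ a ∈ V1, ∃ b ∈ V2, v = a + b := fun v => by
      have hv : v ∈ V1 ⊔ V2 := by rw [codisjoint_iff.mp hc.codisjoint]; trivial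
      obtain ⟨a, ha, b, hb, h⟩ := Submodule.mem_sup.mp hv
      exact ⟨a, ha, b, hb, h.symm⟩
    constructor
    · ext x
      constructor
      · intro hx
        exact ⟨x, hP1 x hx⟩
      · rintro ⟨y, rfl⟩
        obtain ⟨a, ha, b, hb, rfl⟩ := decomp y
        rw [hP a ha b hb]; exact ha
    · ext x
      constructor
      · intro hx
        exact ⟨x, by simp [hP2 x hx]⟩
      · rintro ⟨y, rfl⟩
        obtain ⟨a, ha, b, hb, rfl⟩ := decomp y
        simp only [LinearMap.sub_apply, LinearMap.id_apply]
        rw [hP a ha b hb]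
        simpa using hb
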